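/- arXiv:1206.4723 — 2 statements merged into one kernel-verified Lean document; each statement's English description precedes it below -/
import Mathlib

section
/- Let K ≥ 1 and for each l ∈ {1,…,K} let λ_l > 0, P_l > 0, B_l > 0, ε_l > 2 and m_l > 0 be given, and set a_l = λ_l·π·(P_l B_l)^{2/ε_l}·m_l. Let R₁,…,R_K be independent nonnegative random variables such that P(R_l > r) = exp(−a_l·r^{2/ε_l}) for all r ≥ 0 and all l, fix k ∈ {1,…,K}, write p_k = P(R_k < R_l for all l ≠ k), and note p_k > 0. Then the conditional tail function g(r) = P(R_k > r | R_k < R_l for all l ≠ k) is differentiable at every r > 0 with derivative g′(r) = −f(r), where f(r) = (1/p_k)·λ_k·(2π/ε_k)·(P_k B_k)^{2/ε_k}·m_k·r^{2/ε_k − 1}·exp(−Σ_{l=1}^K λ_l·π·(P_l B_l)^{2/ε_l}·m_l·r^{2/ε_l}); that is, f is the conditional probability density of the serving-BS distance given that the serving BS belongs to tier k. -/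
/-!
Given `R k = x`, the event that tier `k` serves at distance beyond `s` asks `x > s` and `R l > x`
for every other tier, so by independence its probability is the integral over `x > s` of the
Weibull density of `R k` times `∏_{l ≠ k} exp (-a_l x ^ c_l)`; this integrand is `p_k f(x)`.
Hence `p_k g(s) = ∫_s^∞ p_k f`, the fundamental theorem of calculus gives `g' = -f`, and
`p_k > 0` because the integrand is positive on `(0, ∞)`.
-/

open MeasureTheory ProbabilityTheory Real
open Set Filter Topology
open scoped ENNReal

section Weibull

/-- Density of the law on `(0, ∞)` with tail `exp (-A t ^ c)`, a Weibull law of shape `c`. -/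
noncomputable def weibullPDFReal (A c x : ℝ) : ℝ := A * c * x ^ (c - 1) * exp (-(A * x ^ c))

noncomputable def weibullMeasure (A c : ℝ) : Measure ℝ :=
  (volume.restrict (Ioi 0)).withDensity fun x => ENNReal.ofReal (weibullPDFReal A c x)

variable {A c : ℝ}

lemma weibullPDFReal_nonneg (hA : 0 ≤ A) (hc : 0 ≤ c) {x : ℝ} (hx : 0 ≤ x) :
    0 ≤ weibullPDFReal A c x := by
  unfold weibullPDFReal; positivity

lemma measurable_weibullPDFReal : Measurable (weibullPDFReal A c) := by
  unfold weibullPDFReal; fun_prop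

lemma hasDerivAt_neg_exp_neg_mul_rpow {x : ℝ} (hx : 0 < x) :
    HasDerivAt (fun x => -exp (-(A * x ^ c))) (weibullPDFReal A c x) x :=
  (((hasDerivAt_rpow_const (p := c) (Or.inl hx.ne')).const_mul A).neg.exp).neg.congr_deriv
    (by unfold weibullPDFReal; simp only [Pi.neg_apply]; ring)

lemma continuous_exp_neg_mul_rpow (hc : 0 ≤ c) : Continuous fun x : ℝ => exp (-(A * x ^ c)) :=
  (continuous_const.mul (continuous_rpow_const hc)).neg.rexp

lemma intervalIntegrable_weibullPDFReal (hc : 0 < c) (u t : ℝ) :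
    IntervalIntegrable (weibullPDFReal A c) volume u t :=
  ((intervalIntegral.intervalIntegrable_rpow' (by linarith)).const_mul (A * c)).mul_continuousOn
    (continuous_exp_neg_mul_rpow hc.le).continuousOn

lemma integral_weibullPDFReal (hc : 0 < c) {t : ℝ} (ht : 0 ≤ t) :
    ∫ x in (0)..t, weibullPDFReal A c x = 1 - exp (-(A * t ^ c)) := by
  rw [intervalIntegral.integral_eq_sub_of_hasDerivAt_of_le (f := fun x => -exp (-(A * x ^ c))) ht
    (continuous_exp_neg_mul_rpow hc.le).neg.continuousOn
    (fun x hx => hasDerivAt_neg_exp_neg_mul_rpow hx.1)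
    (intervalIntegrable_weibullPDFReal hc 0 t), zero_rpow hc.ne']
  simp only [mul_zero, neg_zero, exp_zero]
  ring

lemma weibullMeasure_Iic (hA : 0 ≤ A) (hc : 0 < c) (t : ℝ) :
    weibullMeasure A c (Iic t) = ENNReal.ofReal (1 - exp (-(A * max t 0 ^ c))) := by
  rw [weibullMeasure, withDensity_apply _ measurableSet_Iic,
    Measure.restrict_restrict measurableSet_Iic, Iic_inter_Ioi]
  rcases le_or_gt t 0 with ht | ht
  · simp [Ioc_eq_empty_of_le ht, max_eq_right ht, zero_rpow hc.ne']
  rw [max_eq_left ht.le, ← integral_weibullPDFReal hc ht.le,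
    intervalIntegral.integral_of_le ht.le, ofReal_integral_eq_lintegral_ofReal]
  · exact (intervalIntegrable_iff_integrableOn_Ioc_of_le ht.le).mp
      (intervalIntegrable_weibullPDFReal hc 0 t)
  · filter_upwards [ae_restrict_mem measurableSet_Ioc] with x hx
    exact weibullPDFReal_nonneg hA hc.le hx.1.le

lemma eq_weibullMeasure_of_measure_Ioi {μ : Measure ℝ} [IsProbabilityMeasure μ]
    (hA : 0 ≤ A) (hc : 0 < c)
    (htail : ∀ t, 0 ≤ t → μ (Ioi t) = ENNReal.ofReal (exp (-(A * t ^ c)))) :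
    μ = weibullMeasure A c := by
  have hIic : ∀ t, 0 ≤ t → μ (Iic t) = ENNReal.ofReal (1 - exp (-(A * t ^ c))) := by
    intro t ht
    rw [← compl_Ioi, prob_compl_eq_one_sub measurableSet_Ioi, htail t ht, ← ENNReal.ofReal_one,
      ← ENNReal.ofReal_sub _ (exp_nonneg _)]
  refine Measure.ext_of_Iic μ _ fun t => ?_
  rw [weibullMeasure_Iic hA hc, ← hIic _ (le_max_right t 0)]
  rcases le_or_gt t 0 with ht | ht
  · have h0 : μ (Iic 0) = 0 := by simp [hIic 0 le_rfl, zero_rpow hc.ne']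
    rw [max_eq_right ht, h0]
    exact measure_mono_null (Iic_subset_Iic.mpr ht) h0
  · rw [max_eq_left ht.le]

lemma setLIntegral_weibullMeasure {g : ℝ → ℝ≥0∞} {s : Set ℝ} (hg : Measurable g)
    (hs : MeasurableSet s) (hs0 : s ⊆ Ioi 0) :
    ∫⁻ x in s, g x ∂weibullMeasure A c
      = ∫⁻ x in s, ENNReal.ofReal (weibullPDFReal A c x) * g x := by
  rw [weibullMeasure, setLIntegral_withDensity_eq_setLIntegral_mul _
    measurable_weibullPDFReal.ennreal_ofReal hg hs, Measure.restrict_restrict hs,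
    inter_eq_left.mpr hs0]
  rfl

lemma measure_lt_and_forall_ne_lt_eq_setLIntegral_prod {Ω ι : Type*} [MeasurableSpace Ω]
    {μ : Measure Ω} [IsProbabilityMeasure μ] [Fintype ι] [DecidableEq ι]
    {R : ι → Ω → ℝ}
    (hmeas : ∀ l, Measurable (R l)) (hindep : iIndepFun R μ) (k : ι) (s : ℝ) :
    μ {ω | s < R k ω ∧ ∀ l, l ≠ k → R k ω < R l ω}
      = ∫⁻ x in Ioi s, ∏ l ∈ Finset.univ.erase k, μ {ω | x < R l ω} ∂μ.map (R k) := by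
  set S := Finset.univ.erase k
  set Y : Ω → S → ℝ := fun ω l => R l ω
  have hY : Measurable Y := measurable_pi_lambda _ fun l => hmeas l
  have hindepY : IndepFun (R k) Y μ :=
    (hindep.indepFun_finset {k} S (by simp [S]) hmeas).comp
      (φ := fun g : ({k} : Finset ι) → ℝ => g ⟨k, Finset.mem_singleton_self k⟩) (ψ := id)
      (measurable_pi_apply _) measurable_id
  set C : Set (ℝ × (S → ℝ)) := {p | s < p.1 ∧ ∀ l, p.1 < p.2 l}
  have hC : MeasurableSet C := by
    simp only [C, ofPred_and, ofPred_forall]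
    exact (measurableSet_lt measurable_const measurable_fst).inter
      (.iInter fun l => measurableSet_lt measurable_fst
        ((measurable_pi_apply l).comp measurable_snd))
  have hevent : {ω | s < R k ω ∧ ∀ l, l ≠ k → R k ω < R l ω}
      = (fun ω => (R k ω, Y ω)) ⁻¹' C := by
    ext ω
    simp [C, Y, S]
  have hslice : ∀ x, μ.map Y (Prod.mk x ⁻¹' C)
      = (Ioi s).indicator (fun x => ∏ l ∈ S, μ {ω | x < R l ω}) x := by
    intro x
    by_cases hx : s < x
    · have hpre : Y ⁻¹' (Prod.mk x ⁻¹' C) = ⋂ l ∈ S, R l ⁻¹' Ioi x := by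
        ext ω
        simp [C, Y, S, hx]
      rw [indicator_of_mem (mem_Ioi.mpr hx), Measure.map_apply hY (measurable_prodMk_left hC), hpre,
        hindep.measure_inter_preimage_eq_mul S fun _ _ => measurableSet_Ioi]
      rfl
    · have hempty : Prod.mk x ⁻¹' C = ∅ := by
        ext y; simp [C, hx]
      simp [hempty, hx]
  rw [hevent, ← Measure.map_apply ((hmeas k).prodMk hY) hC,
    (indepFun_iff_map_prod_eq_prod_map_map (hmeas k).aemeasurable hY.aemeasurable).mp hindepY,
    Measure.prod_apply hC, lintegral_congr hslice, lintegral_indicator measurableSet_Ioi]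

lemma hasDerivAt_toReal_setLIntegral_Ioi {f : ℝ → ℝ} {u r : ℝ} (hur : u < r)
    (hf : Measurable f) (hf_nonneg : ∀ x ∈ Ioi u, 0 ≤ f x)
    (hfin : ∫⁻ x in Ioi u, ENNReal.ofReal (f x) ≠ ∞)
    (hcont : ContinuousAt f r) :
    HasDerivAt (fun s => (∫⁻ x in Ioi s, ENNReal.ofReal (f x)).toReal) (-f r) r := by
  have hint : IntegrableOn f (Ioi u) :=
    ⟨hf.aestronglyMeasurable, (hasFiniteIntegral_iff_ofReal
      (ae_restrict_of_forall_mem measurableSet_Ioi hf_nonneg)).mpr hfin.lt_top⟩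
  have heq : (fun s => (∫⁻ x in Ioi s, ENNReal.ofReal (f x)).toReal)
      =ᶠ[𝓝 r] fun s => (∫ x in Ioi u, f x) - ∫ x in u..s, f x := by
    filter_upwards [Ioi_mem_nhds hur] with s hs
    rw [← intervalIntegral.integral_Ioi_sub_Ioi hint hs.le, sub_sub_cancel,
      integral_eq_lintegral_of_nonneg_ae _ hf.aestronglyMeasurable]
    exact ae_restrict_of_forall_mem measurableSet_Ioi fun x (hx : s < x) =>
      hf_nonneg x (lt_trans hs hx)
  have hii : IntervalIntegrable f volume u r :=
    (intervalIntegrable_iff_integrableOn_Ioc_of_le hur.le).mpr (hint.mono_set Ioc_subset_Ioi_self)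
  exact ((intervalIntegral.integral_hasDerivAt_right hii
    hf.stronglyMeasurable.stronglyMeasurableAtFilter hcont).const_sub _).congr_of_eventuallyEq heq

section ServingTier

variable {ι : Type*} [Fintype ι]

/-- With `a l = λ_l π (P_l B_l) ^ (2 / ε_l) m_l` and `c l = 2 / ε_l`, this is `p_k f`. -/
noncomputable def servingDensity (a c : ι → ℝ) (k : ι) (x : ℝ) : ℝ :=
  a k * c k * x ^ (c k - 1) * exp (-∑ l, a l * x ^ c l)

variable {a c : ι → ℝ} {k : ι}

lemma measurable_servingDensity : Measurable (servingDensity a c k) := by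
  unfold servingDensity; fun_prop

lemma continuousAt_servingDensity {x : ℝ} (hx : 0 < x) :
    ContinuousAt (servingDensity a c k) x := by
  unfold servingDensity
  fun_prop (disch := exact Or.inl hx.ne')

lemma servingDensity_nonneg (ha : 0 ≤ a k) (hc : 0 ≤ c k) {x : ℝ} (hx : 0 ≤ x) :
    0 ≤ servingDensity a c k x := by
  unfold servingDensity; positivity

lemma servingDensity_pos (ha : 0 < a k) (hc : 0 < c k) {x : ℝ} (hx : 0 < x) :
    0 < servingDensity a c k x := by
  unfold servingDensity; positivity

lemma weibullPDFReal_mul_prod_exp [DecidableEq ι] (x : ℝ) :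
    weibullPDFReal (a k) (c k) x * ∏ l ∈ Finset.univ.erase k, exp (-(a l * x ^ c l))
      = servingDensity a c k x := by
  rw [weibullPDFReal, servingDensity, mul_assoc, ← exp_sum, ← exp_add,
    Finset.add_sum_erase _ (fun l => -(a l * x ^ c l)) (Finset.mem_univ k), Finset.sum_neg_distrib]

lemma setLIntegral_servingDensity_pos (ha : 0 < a k) (hc : 0 < c k) :
    0 < ∫⁻ x in Ioi 0, ENNReal.ofReal (servingDensity a c k x) := by
  have hsupp : Ioi 0 ⊆ Function.support fun x => ENNReal.ofReal (servingDensity a c k x) :=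
    fun x hx => (ENNReal.ofReal_pos.mpr (servingDensity_pos ha hc hx)).ne'
  rw [setLIntegral_pos_iff measurable_servingDensity.ennreal_ofReal, inter_eq_right.mpr hsupp,
    volume_Ioi]
  exact ENNReal.zero_lt_top

lemma measure_lt_and_forall_ne_lt_eq_setLIntegral_servingDensity {Ω : Type*} [MeasurableSpace Ω]
    {μ : Measure Ω} [IsProbabilityMeasure μ] {R : ι → Ω → ℝ}
    (hmeas : ∀ l, Measurable (R l)) (hindep : iIndepFun R μ) (ha : 0 ≤ a k) (hc : 0 < c k)
    (htail : ∀ l, ∀ t : ℝ, 0 ≤ t →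
      μ {ω | t < R l ω} = ENNReal.ofReal (exp (-(a l * t ^ c l))))
    {s : ℝ} (hs : 0 ≤ s) :
    μ {ω | s < R k ω ∧ ∀ l, l ≠ k → R k ω < R l ω}
      = ∫⁻ x in Ioi s, ENNReal.ofReal (servingDensity a c k x) := by
  classical
  have := Measure.isProbabilityMeasure_map (μ := μ) (hmeas k).aemeasurable
  have hlaw : μ.map (R k) = weibullMeasure (a k) (c k) :=
    eq_weibullMeasure_of_measure_Ioi ha hc fun t ht => by
      rw [Measure.map_apply (hmeas k) measurableSet_Ioi]; exact htail k t ht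
  have hIoi : Ioi s ⊆ Ioi 0 := Ioi_subset_Ioi hs
  rw [measure_lt_and_forall_ne_lt_eq_setLIntegral_prod hmeas hindep, hlaw,
    setLIntegral_congr_fun measurableSet_Ioi fun x hx => Finset.prod_congr rfl fun l _ =>
      htail l x (hs.trans hx.le),
    setLIntegral_weibullMeasure (by fun_prop) measurableSet_Ioi hIoi]
  refine setLIntegral_congr_fun measurableSet_Ioi fun x hx => ?_
  rw [← ENNReal.ofReal_prod_of_nonneg fun _ _ => (exp_pos _).le,
    ← ENNReal.ofReal_mul (weibullPDFReal_nonneg ha hc.le (hIoi hx).le),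
    weibullPDFReal_mul_prod_exp]

end ServingTier

theorem stmt4_general {Ω : Type*} [MeasureSpace Ω] [IsProbabilityMeasure (ℙ : Measure Ω)]
    (K : ℕ)
    (lam P B eps m a : Fin K → ℝ)
    (hlam : ∀ l, 0 < lam l) (hP : ∀ l, 0 < P l) (hB : ∀ l, 0 < B l)
    (heps : ∀ l, 2 < eps l) (hm : ∀ l, 0 < m l)
    (ha : ∀ l, a l = lam l * π * (P l * B l) ^ (2 / eps l) * m l)
    (R : Fin K → Ω → ℝ) (hmeas : ∀ l, Measurable (R l))
    (hindep : iIndepFun R ℙ)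
    (htail : ∀ l, ∀ r : ℝ, 0 ≤ r →
      ℙ {ω | r < R l ω} = ENNReal.ofReal (Real.exp (-(a l * r ^ (2 / eps l)))))
    (k : Fin K)
    (pk : ℝ) (hpk : pk = (ℙ {ω | ∀ l, l ≠ k → R k ω < R l ω}).toReal) :
    0 < pk ∧
    ∀ r : ℝ, 0 < r →
      HasDerivAt
        (fun s : ℝ => (ℙ {ω | s < R k ω ∧ ∀ l, l ≠ k → R k ω < R l ω}).toReal / pk)
        (-((1 / pk) * (lam k * (2 * π / eps k) * (P k * B k) ^ (2 / eps k) * m k *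
            r ^ (2 / eps k - 1) *
            Real.exp (-(∑ l, lam l * π * (P l * B l) ^ (2 / eps l) * m l * r ^ (2 / eps l))))))
        r := by
  set f := servingDensity a (fun l => 2 / eps l) k
  have hck : 0 < 2 / eps k := div_pos two_pos (by linarith [heps k])
  have hak : 0 < a k := by
    rw [ha k]
    have := rpow_pos_of_pos (mul_pos (hP k) (hB k)) (2 / eps k)
    exact mul_pos (mul_pos (mul_pos (hlam k) pi_pos) this) (hm k)
  have hevent (s : ℝ) (hs : 0 ≤ s) :
      ℙ {ω | s < R k ω ∧ ∀ l, l ≠ k → R k ω < R l ω}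
        = ∫⁻ x in Ioi s, ENNReal.ofReal (f x) :=
    measure_lt_and_forall_ne_lt_eq_setLIntegral_servingDensity hmeas hindep hak.le hck htail hs
  have hpk_pos : 0 < pk := by
    rw [hpk]
    refine ENNReal.toReal_pos (ne_of_gt ?_) (measure_ne_top _ _)
    calc 0 < ∫⁻ x in Ioi 0, ENNReal.ofReal (f x) := setLIntegral_servingDensity_pos hak hck
      _ = ℙ {ω | 0 < R k ω ∧ ∀ l, l ≠ k → R k ω < R l ω} := (hevent 0 le_rfl).symm
      _ ≤ ℙ {ω | ∀ l, l ≠ k → R k ω < R l ω} := measure_mono fun ω h => h.2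
  refine ⟨hpk_pos, fun r hr => ?_⟩
  have hderiv := hasDerivAt_toReal_setLIntegral_Ioi hr measurable_servingDensity
    (fun x hx => servingDensity_nonneg hak.le hck.le (le_of_lt hx))
    (hevent 0 le_rfl ▸ measure_ne_top _ _) (continuousAt_servingDensity hr)
  refine ((hderiv.div_const pk).congr_of_eventuallyEq ?_).congr_deriv ?_
  · filter_upwards [Ioi_mem_nhds hr] with s hs
    rw [hevent s hs.le]
  · simp only [servingDensity, ha]
    field_simp

/-- The conditional tail function `g(r) = P(R_k > r | R_k < R_l for all l ≠ k)` is
differentiable at every `r > 0` with derivative `-f(r)`, where `f` is the conditional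
probability density of the serving-BS distance given that the serving BS is in tier `k`;
moreover the conditioning event has positive probability. -/
theorem stmt4 {Ω : Type*} [MeasureSpace Ω] [IsProbabilityMeasure (ℙ : Measure Ω)]
    (K : ℕ) (hK : 1 ≤ K)
    (lam P B eps m a : Fin K → ℝ)
    (hlam : ∀ l, 0 < lam l) (hP : ∀ l, 0 < P l) (hB : ∀ l, 0 < B l)
    (heps : ∀ l, 2 < eps l) (hm : ∀ l, 0 < m l)
    (ha : ∀ l, a l = lam l * π * (P l * B l) ^ (2 / eps l) * m l)
    (R : Fin K → Ω → ℝ) (hmeas : ∀ l, Measurable (R l))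
    (hindep : iIndepFun R ℙ)
    (hnonneg : ∀ l ω, 0 ≤ R l ω)
    (htail : ∀ l, ∀ r : ℝ, 0 ≤ r →
      ℙ {ω | r < R l ω} = ENNReal.ofReal (Real.exp (-(a l * r ^ (2 / eps l)))))
    (k : Fin K)
    (pk : ℝ) (hpk : pk = (ℙ {ω | ∀ l, l ≠ k → R k ω < R l ω}).toReal) :
    0 < pk ∧
    ∀ r : ℝ, 0 < r →
      HasDerivAt
        (fun s : ℝ => (ℙ {ω | s < R k ω ∧ ∀ l, l ≠ k → R k ω < R l ω}).toReal / pk)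
        (-((1 / pk) * (lam k * (2 * π / eps k) * (P k * B k) ^ (2 / eps k) * m k *
            r ^ (2 / eps k - 1) *
            Real.exp (-(∑ l, lam l * π * (P l * B l) ^ (2 / eps l) * m l * r ^ (2 / eps l))))))
        r :=
  stmt4_general K lam P B eps m a hlam hP hB heps hm ha R hmeas hindep htail k pk hpk
end Weibull
end

section
/- Let 0 < a < 1 and ω ∈ ℝ. Then the real part of F_a(iω) satisfies Re F_a(iω) = 1 + a·∫_0^1 (1 − cos(ωu))·u^{−a−1} du; in particular Re F_a(iω) ≥ 1 > 0, so F_a(iω) ≠ 0 for every real ω. -/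
open MeasureTheory Real Complex

/-- The confluent hypergeometric function `₁F₁(-a; 1-a; z)`, defined by its everywhere-convergent
power series `Σ_n ((-a)_n / (1-a)_n) zⁿ/n!`, where `(x)_n` is the (ascending) Pochhammer symbol. -/
noncomputable def confluentF (a : ℝ) (z : ℂ) : ℂ :=
  ∑' n : ℕ, ((ascPochhammer ℂ n).eval (-(a : ℂ)) / (ascPochhammer ℂ n).eval (1 - (a : ℂ)))
    * z ^ n / (Nat.factorial n : ℂ)

/-!
Since `(-a)ₙ / (1-a)ₙ = -a / (n - a) = -a ∫₀¹ u^(n-a-1) du` for `n ≥ 1`, summing the exponential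
series under the integral gives `F_a(z) = 1 + a ∫₀¹ (1 - e^(zu)) u^(-a-1) du` for every complex `z`.
At `z = iω` the real part of the integrand is `(1 - cos ωu) u^(-a-1) ≥ 0`.
-/

open Set Polynomial

open scoped Nat

theorem ascPochhammer_succ_eval_div_eval_add_one {K : Type*} [Field K] (x : K) (n : ℕ)
    (h : (ascPochhammer K n).eval (x + 1) ≠ 0) :
    (ascPochhammer K (n + 1)).eval x / (ascPochhammer K (n + 1)).eval (x + 1) =
      x / (x + 1 + n) := by
  rw [ascPochhammer_succ_eval n (x + 1), ascPochhammer_succ_left, eval_mul, eval_X, eval_comp,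
    eval_add, eval_X, eval_one, mul_comm (eval _ _), mul_div_mul_right _ _ h]

theorem ascPochhammer_eval_one_sub_ne_zero {a : ℝ} (ha : a < 1) (n : ℕ) :
    (ascPochhammer ℂ n).eval (1 - (a : ℂ)) ≠ 0 := by
  have hcast : (ascPochhammer ℂ n).eval (1 - (a : ℂ)) = ((ascPochhammer ℝ n).eval (1 - a) : ℝ) := by
    rw [← ascPochhammer_map ofRealHom, eval_map]
    simpa using eval₂_at_apply (p := ascPochhammer ℝ n) ofRealHom (1 - a)
  rw [hcast, ofReal_ne_zero]
  exact (ascPochhammer_pos n _ (sub_pos.mpr ha)).ne'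

theorem confluentF_eq_of_hasSum {a : ℝ} (ha : a < 1) (z : ℂ) {s : ℂ}
    (hs : HasSum (fun n : ℕ => z ^ (n + 1) / (((n + 1)! : ℂ) * (a - (n + 1)))) s) :
    confluentF a z = 1 + a * s := by
  have hsucc : ∀ n : ℕ,
      (ascPochhammer ℂ (n + 1)).eval (-(a : ℂ)) / (ascPochhammer ℂ (n + 1)).eval (1 - (a : ℂ))
        * z ^ (n + 1) / ((n + 1)! : ℂ) = a * (z ^ (n + 1) / (((n + 1)! : ℂ) * (a - (n + 1)))) := by
    intro n
    have hne : (ascPochhammer ℂ n).eval (-(a : ℂ) + 1) ≠ 0 := by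
      rw [neg_add_eq_sub]
      exact ascPochhammer_eval_one_sub_ne_zero ha n
    have hratio := ascPochhammer_succ_eval_div_eval_add_one (-(a : ℂ)) n hne
    rw [neg_add_eq_sub] at hratio
    rw [hratio, show 1 - (a : ℂ) + n = -(a - (n + 1)) by ring, div_neg]
    simp only [div_eq_mul_inv, mul_inv]
    ring
  have h := HasSum.zero_add (f := fun n : ℕ => (ascPochhammer ℂ n).eval (-(a : ℂ)) /
    (ascPochhammer ℂ n).eval (1 - (a : ℂ)) * z ^ n / (n ! : ℂ))
    ((hs.mul_left (a : ℂ)).congr_fun hsucc)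
  unfold confluentF
  simpa using h.tsum_eq

theorem integral_Ioc_zero_one_rpow {r : ℝ} (hr : -1 < r) :
    ∫ u in Ioc (0 : ℝ) 1, u ^ r = 1 / (r + 1) := by
  rw [← intervalIntegral.integral_of_le zero_le_one, integral_rpow (Or.inl hr), one_rpow,
    zero_rpow (by linarith), sub_zero]

theorem hasSum_cexp_sub_one (w : ℂ) :
    HasSum (fun n : ℕ => w ^ (n + 1) / ((n + 1)! : ℂ)) (cexp w - 1) := by
  have h := (hasSum_nat_add_iff' 1).mpr (NormedSpace.expSeries_div_hasSum_exp w)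
  simpa [← exp_eq_exp_ℂ] using h

theorem hasSum_one_sub_cexp_mul_rpow (a : ℝ) (z : ℂ) {u : ℝ} (hu : 0 < u) :
    HasSum (fun n : ℕ => -(z ^ (n + 1) / (n + 1)!) * (u ^ ((n : ℝ) - a) : ℝ))
      ((1 - cexp (z * u)) * (u ^ (-a - 1) : ℝ)) := by
  have h := (hasSum_cexp_sub_one (z * u)).neg.mul_right ((u ^ (-a - 1) : ℝ) : ℂ)
  rw [neg_sub] at h
  refine h.congr_fun fun n => ?_
  have hsplit : u ^ ((n : ℝ) - a) = u ^ (n + 1) * u ^ (-a - 1) := by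
    rw [← rpow_natCast, ← rpow_add hu]
    congr 1
    push_cast
    ring
  rw [hsplit]
  push_cast
  ring

theorem hasSum_integral_one_sub_cexp_mul_rpow {a : ℝ} (ha : a < 1) (z : ℂ) :
    HasSum (fun n : ℕ => z ^ (n + 1) / (((n + 1)! : ℂ) * (a - (n + 1))))
      (∫ u in Ioc (0 : ℝ) 1, (1 - cexp (z * u)) * (u ^ (-a - 1) : ℝ)) := by
  set F : ℕ → ℝ → ℂ := fun n u => -(z ^ (n + 1) / (n + 1)!) * (u ^ (n - a) : ℝ) with hF
  have hpow : ∀ n : ℕ, -1 < (n : ℝ) - a := fun n => by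
    have := n.cast_nonneg (α := ℝ)
    linarith
  have hint : ∀ n, IntegrableOn (F n) (Ioc 0 1) := fun n =>
    (intervalIntegral.intervalIntegrable_rpow' (hpow n)).1.ofReal.const_mul _
  have hnorm : ∀ n : ℕ,
      ∫ u in Ioc (0 : ℝ) 1, ‖F n u‖ = ‖z‖ ^ (n + 1) / (n + 1)! * (1 / (n - a + 1)) := by
    intro n
    rw [← integral_Ioc_zero_one_rpow (hpow n), ← integral_const_mul]
    refine setIntegral_congr_fun measurableSet_Ioc fun u hu => ?_
    simp [hF, abs_of_nonneg (rpow_nonneg hu.1.le _)]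
  have hsummable : Summable fun n : ℕ => ∫ u in Ioc (0 : ℝ) 1, ‖F n u‖ := by
    simp_rw [hnorm]
    refine .of_nonneg_of_le (fun n => ?_) (fun n => ?_)
      (((Real.summable_pow_div_factorial ‖z‖).comp_injective (add_left_injective 1)).mul_right
        (1 / (1 - a)))
    · exact mul_nonneg (by positivity) (one_div_nonneg.mpr (by linarith [hpow n]))
    · rw [Function.comp_apply]
      gcongr
      linarith [n.cast_nonneg (α := ℝ)]
  have hval : ∀ n : ℕ,
      ∫ u in Ioc (0 : ℝ) 1, F n u = z ^ (n + 1) / (((n + 1)! : ℂ) * (a - (n + 1))) := by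
    intro n
    rw [integral_const_mul, integral_complex_ofReal, integral_Ioc_zero_one_rpow (hpow n)]
    push_cast
    rw [show (n : ℂ) - a + 1 = -(a - (n + 1)) by ring]
    simp only [div_eq_mul_inv, mul_inv, inv_neg]
    ring
  have hpt : ∀ u ∈ Ioc (0 : ℝ) 1, ∑' n, F n u = (1 - cexp (z * u)) * (u ^ (-a - 1) : ℝ) :=
    fun u hu => (hasSum_one_sub_cexp_mul_rpow a z hu.1).tsum_eq
  have h := hasSum_integral_of_summable_integral_norm hint hsummable
  rw [setIntegral_congr_fun measurableSet_Ioc hpt] at h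
  simpa [hval] using h

theorem integrableOn_one_sub_cexp_mul_rpow {a : ℝ} (ha : a < 1) (z : ℂ) :
    IntegrableOn (fun u : ℝ => (1 - cexp (z * u)) * (u ^ (-a - 1) : ℝ)) (Ioc 0 1) := by
  have hdom : IntegrableOn (fun u : ℝ => ‖z‖ * Real.exp ‖z‖ * u ^ (-a)) (Ioc 0 1) :=
    (intervalIntegral.intervalIntegrable_rpow' (by linarith)).1.const_mul _
  refine hdom.mono' ?_ ((ae_restrict_iff' measurableSet_Ioc).mpr (ae_of_all _ fun u hu => ?_))
  · refine ContinuousOn.aestronglyMeasurable ?_ measurableSet_Ioc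
    exact (by fun_prop : Continuous fun u : ℝ => 1 - cexp (z * u)).continuousOn.mul
      (continuous_ofReal.comp_continuousOn
        (continuousOn_id.rpow_const fun u hu => Or.inl hu.1.ne'))
  · have hexp : ‖1 - cexp (z * u)‖ ≤ ‖z‖ * u * Real.exp ‖z‖ := by
      have h := norm_exp_sub_sum_le_norm_mul_exp (z * u) 1
      rw [norm_sub_rev]
      simp only [Finset.range_one, Finset.sum_singleton, pow_zero, Nat.factorial_zero,
        Nat.cast_one, div_one, pow_one, norm_mul, norm_real, Real.norm_eq_abs,
        abs_of_pos hu.1] at h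
      refine h.trans (mul_le_mul_of_nonneg_left (Real.exp_le_exp.mpr ?_)
        (mul_nonneg (norm_nonneg z) hu.1.le))
      exact mul_le_of_le_one_right (norm_nonneg z) hu.2
    have hu0 := hu.1.ne'
    calc ‖(1 - cexp (z * u)) * (u ^ (-a - 1) : ℝ)‖ = ‖1 - cexp (z * u)‖ * u ^ (-a - 1) := by
          rw [norm_mul, norm_real, Real.norm_of_nonneg (rpow_nonneg hu.1.le _)]
      _ ≤ ‖z‖ * u * Real.exp ‖z‖ * u ^ (-a - 1) :=
          mul_le_mul_of_nonneg_right hexp (rpow_nonneg hu.1.le _)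
      _ = ‖z‖ * Real.exp ‖z‖ * u ^ (-a) := by
          rw [rpow_sub_one hu0]
          field_simp

theorem confluentF_eq_one_add_integral {a : ℝ} (ha : a < 1) (z : ℂ) :
    confluentF a z = 1 + a * ∫ u in Ioc (0 : ℝ) 1, (1 - cexp (z * u)) * (u ^ (-a - 1) : ℝ) :=
  confluentF_eq_of_hasSum ha z (hasSum_integral_one_sub_cexp_mul_rpow ha z)

theorem re_confluentF_I_mul {a : ℝ} (ha : a < 1) (ω : ℝ) :
    (confluentF a (I * ω)).re =
      1 + a * ∫ u in Ioc (0 : ℝ) 1, (1 - Real.cos (ω * u)) * u ^ (-a - 1) := by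
  have hre := integral_re (integrableOn_one_sub_cexp_mul_rpow ha (I * ω))
  simp only [RCLike.re_to_complex] at hre
  rw [confluentF_eq_one_add_integral ha, add_re, one_re, re_ofReal_mul, ← hre]
  congr 2
  refine setIntegral_congr_fun measurableSet_Ioc fun u _ => ?_
  rw [re_mul_ofReal, sub_re, one_re, show I * ω * u = ((ω * u : ℝ) : ℂ) * I by push_cast; ring,
    exp_ofReal_mul_I_re]

/-- For `0 < a < 1` and real `ω`,
`Re ₁F₁(-a; 1-a; iω) = 1 + a ∫_0^1 (1 - cos(ωu)) u^{-a-1} du ≥ 1 > 0`, so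
`₁F₁(-a; 1-a; iω) ≠ 0`. -/
theorem stmt8 (a ω : ℝ) (ha0 : 0 < a) (ha1 : a < 1) :
    (confluentF a (Complex.I * (ω : ℂ))).re
        = 1 + a * ∫ u in Set.Ioc (0:ℝ) 1, (1 - Real.cos (ω * u)) * u ^ (-a - 1) ∧
    1 ≤ (confluentF a (Complex.I * (ω : ℂ))).re ∧
    confluentF a (Complex.I * (ω : ℂ)) ≠ 0 := by
  have hre := re_confluentF_I_mul ha1 ω
  have hint : 0 ≤ ∫ u in Set.Ioc (0:ℝ) 1, (1 - Real.cos (ω * u)) * u ^ (-a - 1) :=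
    setIntegral_nonneg measurableSet_Ioc fun u hu =>
      mul_nonneg (sub_nonneg.mpr (Real.cos_le_one _)) (rpow_nonneg hu.1.le _)
  have hge : 1 ≤ (confluentF a (Complex.I * (ω : ℂ))).re := by
    rw [hre]
    exact le_add_of_nonneg_right (mul_nonneg ha0.le hint)
  refine ⟨hre, hge, fun h => ?_⟩
  rw [h, zero_re] at hge
  norm_num at hge
end
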